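/- arXiv:2404.03585 — 4 statements merged into one kernel-verified Lean document; each statement's English description precedes it below -/
import Mathlib

section
/- For (x⁰, x¹) ∈ {(0,1), (1,0)}, the real antisymmetric 4 × 4 matrix M = [[0, x⁰, 0, x¹], [−x⁰, 0, 1, 0], [0, −1, 0, 1], [−x¹, 0, −1, 0]] has ℓ²→ℓ² operator norm exactly (1 + √5)/2 (the golden ratio). In particular, (2/(1+√5)) · M is a valid correlation matrix: it is real, antisymmetric, and has operator norm at most 1. -/
open Matrix

noncomputable def opNorm {m : ℕ} (A : Matrix (Fin m) (Fin m) ℝ) : ℝ :=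
  ‖LinearMap.toContinuousLinearMap (Matrix.toEuclideanLin A)‖

lemma mgold_key1 (g a b c d : ℝ) (hg2 : g ^ 2 = g + 1) (hgp : 0 < g) :
    d ^ 2 + c ^ 2 + (-b + d) ^ 2 + (-a + -c) ^ 2
      ≤ g ^ 2 * (a ^ 2 + b ^ 2 + c ^ 2 + d ^ 2) := by
  have h : g * (g ^ 2 * (a ^ 2 + b ^ 2 + c ^ 2 + d ^ 2)
        - (d ^ 2 + c ^ 2 + (-b + d) ^ 2 + (-a + -c) ^ 2))
      = (g * a - c) ^ 2 + (g * b + d) ^ 2 := by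
    linear_combination (g * (a ^ 2 + b ^ 2) + (g + 1) * (c ^ 2 + d ^ 2)) * hg2
  nlinarith [sq_nonneg (g * a - c), sq_nonneg (g * b + d), hgp, h]

lemma mgold_key2 (g a b c d : ℝ) (hg2 : g ^ 2 = g + 1) (hgp : 0 < g) :
    b ^ 2 + (-a + c) ^ 2 + (-b + d) ^ 2 + c ^ 2
      ≤ g ^ 2 * (a ^ 2 + b ^ 2 + c ^ 2 + d ^ 2) := by
  have h : g * (g ^ 2 * (a ^ 2 + b ^ 2 + c ^ 2 + d ^ 2)
        - (b ^ 2 + (-a + c) ^ 2 + (-b + d) ^ 2 + c ^ 2))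
      = (g * a + c) ^ 2 + (b + g * d) ^ 2 := by
    linear_combination (g * (a ^ 2 + d ^ 2) + (g + 1) * (b ^ 2 + c ^ 2)) * hg2
  nlinarith [sq_nonneg (g * a + c), sq_nonneg (b + g * d), hgp, h]

lemma normsq_eL (A : Matrix (Fin 4) (Fin 4) ℝ) (v : EuclideanSpace ℝ (Fin 4)) :
    ‖Matrix.toEuclideanLin A v‖ ^ 2 = ∑ i, (∑ j, A i j * v j) ^ 2 := by
  rw [EuclideanSpace.norm_eq, Real.sq_sqrt (by positivity)]
  congr 1; ext i
  simp [Matrix.toEuclideanLin_apply, Matrix.mulVec, dotProduct, sq_abs]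

lemma normsq_v (v : EuclideanSpace ℝ (Fin 4)) : ‖v‖ ^ 2 = ∑ i, (v i) ^ 2 := by
  rw [EuclideanSpace.norm_eq, Real.sq_sqrt (by positivity)]
  simp [sq_abs]

lemma opNorm_eq_of (A : Matrix (Fin 4) (Fin 4) ℝ) (c : ℝ) (hc : 0 ≤ c)
    (hub : ∀ v : EuclideanSpace ℝ (Fin 4),
      ‖Matrix.toEuclideanLin A v‖ ^ 2 ≤ c ^ 2 * ‖v‖ ^ 2)
    (w : EuclideanSpace ℝ (Fin 4)) (hw : 0 < ‖w‖)
    (hlb : c ^ 2 * ‖w‖ ^ 2 ≤ ‖Matrix.toEuclideanLin A w‖ ^ 2) :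
    opNorm A = c := by
  unfold opNorm
  set f := LinearMap.toContinuousLinearMap (Matrix.toEuclideanLin A) with hf
  apply le_antisymm
  · refine ContinuousLinearMap.opNorm_le_bound f hc (fun v => ?_)
    have h1 : ‖f v‖ ^ 2 ≤ c ^ 2 * ‖v‖ ^ 2 := hub v
    nlinarith [norm_nonneg (f v), norm_nonneg v, mul_nonneg hc (norm_nonneg v)]
  · have hle := f.le_opNorm w
    have hN : (0:ℝ) ≤ ‖f‖ := norm_nonneg f
    have h2 : c ^ 2 * ‖w‖ ^ 2 ≤ ‖f w‖ ^ 2 := hlb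
    have hw2 : (0:ℝ) < ‖w‖ ^ 2 := by positivity
    have h3 : c ^ 2 ≤ ‖f‖ ^ 2 := by
      nlinarith [norm_nonneg (f w), hle, h2, hw2]
    calc c = Real.sqrt (c ^ 2) := (Real.sqrt_sq hc).symm
      _ ≤ Real.sqrt (‖f‖ ^ 2) := Real.sqrt_le_sqrt h3
      _ = ‖f‖ := Real.sqrt_sq hN

/-- For `(x⁰, x¹) ∈ {(0,1), (1,0)}`, the real antisymmetric matrix
`M = [[0, x⁰, 0, x¹], [−x⁰, 0, 1, 0], [0, −1, 0, 1], [−x¹, 0, −1, 0]]` has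
`ℓ² → ℓ²` operator norm exactly `(1 + √5)/2`; in particular `(2/(1+√5)) • M` is a valid
correlation matrix: real, antisymmetric, and of operator norm at most `1`. -/
theorem block_matrix_opNorm_golden (x0 x1 : ℝ)
    (hx : (x0 = 0 ∧ x1 = 1) ∨ (x0 = 1 ∧ x1 = 0))
    (M : Matrix (Fin 4) (Fin 4) ℝ)
    (hM : M = !![0, x0, 0, x1; -x0, 0, 1, 0; 0, -1, 0, 1; -x1, 0, -1, 0]) :
    opNorm M = (1 + Real.sqrt 5) / 2 ∧
    ((2 / (1 + Real.sqrt 5)) • M)ᵀ = -((2 / (1 + Real.sqrt 5)) • M) ∧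
    opNorm ((2 / (1 + Real.sqrt 5)) • M) ≤ 1 := by
  have h5 : Real.sqrt 5 ^ 2 = 5 := Real.sq_sqrt (by norm_num)
  have h5nn : (0:ℝ) ≤ Real.sqrt 5 := Real.sqrt_nonneg 5
  set g : ℝ := (1 + Real.sqrt 5) / 2 with hg
  have hgp : 0 < g := by rw [hg]; linarith
  have hgs : g ^ 2 = g + 1 := by rw [hg]; nlinarith [h5]
  have hg4 : g ^ 4 = 3 * g + 2 := by linear_combination (g ^ 2 + g + 2) * hgs
  have hnorm : opNorm M = g := by
    have hw2 : ∀ (w : EuclideanSpace ℝ (Fin 4)) (t : ℝ),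
        w = (WithLp.equiv 2 (Fin 4 → ℝ)).symm ![1, 0, t, 0] → 0 < ‖w‖ := by
      intro w t hw
      have h1 : 1 ≤ ‖w‖ ^ 2 := by
        rw [normsq_v]; subst hw
        simp [Fin.sum_univ_four]
        nlinarith [sq_nonneg t]
      nlinarith [norm_nonneg w]
    rcases hx with ⟨h0, h1⟩ | ⟨h0, h1⟩ <;> subst h0 <;> subst h1 <;> subst hM
    · refine opNorm_eq_of _ g hgp.le (fun v => ?_)
        ((WithLp.equiv 2 (Fin 4 → ℝ)).symm ![1, 0, g, 0]) (hw2 _ g rfl) ?_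
      · rw [normsq_eL, normsq_v]
        simp only [Fin.sum_univ_four]
        simp [Matrix.vecHead, Matrix.vecTail]
        linarith [mgold_key1 g (v 0) (v 1) (v 2) (v 3) hgs hgp]
      · rw [normsq_eL, normsq_v]
        simp only [Fin.sum_univ_four]
        simp [Matrix.vecHead, Matrix.vecTail]
        nlinarith [hgs, hg4]
    · refine opNorm_eq_of _ g hgp.le (fun v => ?_)
        ((WithLp.equiv 2 (Fin 4 → ℝ)).symm ![1, 0, -g, 0]) (hw2 _ (-g) rfl) ?_
      · rw [normsq_eL, normsq_v]
        simp only [Fin.sum_univ_four]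
        simp [Matrix.vecHead, Matrix.vecTail]
        linarith [mgold_key2 g (v 0) (v 1) (v 2) (v 3) hgs hgp]
      · rw [normsq_eL, normsq_v]
        simp only [Fin.sum_univ_four]
        simp [Matrix.vecHead, Matrix.vecTail]
        nlinarith [hgs, hg4]
  refine ⟨hnorm, ?_, ?_⟩
  · subst hM
    ext i j
    fin_cases i <;> fin_cases j <;> simp
  · have hsm : opNorm ((2 / (1 + Real.sqrt 5)) • M)
        = |2 / (1 + Real.sqrt 5)| * opNorm M := by
      unfold opNorm
      rw [_root_.map_smul, _root_.map_smul]
      rw [show |2 / (1 + Real.sqrt 5)| = ‖(2 / (1 + Real.sqrt 5) : ℝ)‖ from rfl]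
      exact norm_smul (2 / (1 + Real.sqrt 5) : ℝ)
        (LinearMap.toContinuousLinearMap (Matrix.toEuclideanLin M))
    have hpos : (0:ℝ) < 1 + Real.sqrt 5 := by linarith
    rw [hsm, hnorm, abs_of_pos (by positivity)]
    rw [hg, div_mul_div_comm, div_le_one (by positivity)]
    ring_nf
    linarith
end

section
/- Let Φ > 0 and ε ≥ 0 be real numbers, and let x⁰, x¹, g₂₃, g₃₄, g₁₃, g₂₄ be real numbers satisfying |x⁰| ≤ Φ, |x¹| ≤ Φ, |g₃₄ − 1/Φ| ≤ ε, |g₂₃ − 1/Φ| ≤ ε, |g₁₃| ≤ ε, |g₂₄| ≤ ε, and |(1/Φ)(x⁰ g₃₄ + x¹ g₂₃) − g₁₃ g₂₄ − 1/Φ²| ≤ ε. Then |x⁰ + x¹ − 1| ≤ Φ²(3ε + ε²). -/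
/-- If `|x⁰|, |x¹| ≤ Φ`, the entries `g₃₄, g₂₃` are `ε`-close to `1/Φ`, the entries
`g₁₃, g₂₄` are `ε`-small, and the 4-point value `(1/Φ)(x⁰ g₃₄ + x¹ g₂₃) − g₁₃ g₂₄` is
`ε`-close to `1/Φ²`, then `|x⁰ + x¹ − 1| ≤ Φ²(3ε + ε²)`. -/
theorem soundness_sum_bound (Φ ε : ℝ) (hΦ : 0 < Φ) (hε : 0 ≤ ε)
    (x0 x1 g23 g34 g13 g24 : ℝ)
    (hx0 : |x0| ≤ Φ) (hx1 : |x1| ≤ Φ)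
    (hg34 : |g34 - 1 / Φ| ≤ ε) (hg23 : |g23 - 1 / Φ| ≤ ε)
    (hg13 : |g13| ≤ ε) (hg24 : |g24| ≤ ε)
    (hpf : |(1 / Φ) * (x0 * g34 + x1 * g23) - g13 * g24 - 1 / Φ ^ 2| ≤ ε) :
    |x0 + x1 - 1| ≤ Φ ^ 2 * (3 * ε + ε ^ 2) := by
  have hΦ' : (Φ : ℝ) ≠ 0 := ne_of_gt hΦ
  have key : x0 + x1 - 1 =
      Φ ^ 2 * ((((1 / Φ) * (x0 * g34 + x1 * g23) - g13 * g24 - 1 / Φ ^ 2)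
        - (1 / Φ) * (x0 * (g34 - 1 / Φ) + x1 * (g23 - 1 / Φ))) + g13 * g24) := by
    field_simp
    ring
  have h1 : |x0 * (g34 - 1 / Φ)| ≤ Φ * ε := by
    rw [abs_mul]
    exact mul_le_mul hx0 hg34 (abs_nonneg _) hΦ.le
  have h2 : |x1 * (g23 - 1 / Φ)| ≤ Φ * ε := by
    rw [abs_mul]
    exact mul_le_mul hx1 hg23 (abs_nonneg _) hΦ.le
  have h3 : |(1 / Φ) * (x0 * (g34 - 1 / Φ) + x1 * (g23 - 1 / Φ))| ≤ 2 * ε := by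
    rw [abs_mul, abs_of_pos (by positivity : (0:ℝ) < 1 / Φ)]
    calc 1 / Φ * |x0 * (g34 - 1 / Φ) + x1 * (g23 - 1 / Φ)|
        ≤ 1 / Φ * (Φ * ε + Φ * ε) := by
          gcongr
          exact (abs_add_le _ _).trans (add_le_add h1 h2)
      _ = 2 * ε := by field_simp; ring
  have h4 : |g13 * g24| ≤ ε ^ 2 := by
    rw [abs_mul, sq]
    exact mul_le_mul hg13 hg24 (abs_nonneg _) hε
  rw [key, abs_mul, abs_of_pos (by positivity : (0:ℝ) < Φ ^ 2)]
  gcongr Φ ^ 2 * ?_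
  calc |(((1 / Φ) * (x0 * g34 + x1 * g23) - g13 * g24 - 1 / Φ ^ 2)
        - (1 / Φ) * (x0 * (g34 - 1 / Φ) + x1 * (g23 - 1 / Φ))) + g13 * g24|
      ≤ |((1 / Φ) * (x0 * g34 + x1 * g23) - g13 * g24 - 1 / Φ ^ 2)
        - (1 / Φ) * (x0 * (g34 - 1 / Φ) + x1 * (g23 - 1 / Φ))| + |g13 * g24| := abs_add_le _ _
    _ ≤ (ε + 2 * ε) + ε ^ 2 := by
        gcongr
        exact (abs_sub _ _).trans (add_le_add hpf h3)
    _ = 3 * ε + ε ^ 2 := by ring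
end

section
/- Let ε ≥ 0 and let Λ be a real antisymmetric 6 × 6 matrix with |Λ_{a,b}| ≤ 1 for all a, b, and |Λ_{a,b}| ≤ ε for all a < b with (a,b) ∉ {(1,2), (3,4), (5,6)}. Then |Pf(Λ) − Λ₁₂ Λ₃₄ Λ₅₆| ≤ 14 ε². -/
open Matrix

/-- The Pfaffian of a `k × k` matrix over a field:
`Pf(C) = (1/(2^m m!)) · Σ_{σ ∈ S_{2m}} sgn(σ) · ∏_{i=1}^m C_{σ(2i−1), σ(2i)}` when
`k = 2m` is even, and `0` when `k` is odd. -/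
noncomputable def pfaffian {k : ℕ} {R : Type*} [Field R]
    (C : Matrix (Fin k) (Fin k) R) : R :=
  if h : k % 2 = 0 then
    ((2 : R) ^ (k / 2) * ((k / 2).factorial : R))⁻¹ *
      ∑ σ : Equiv.Perm (Fin k), ((Equiv.Perm.sign σ : ℤ) : R) *
        ∏ i : Fin (k / 2),
          C (σ ⟨2 * (i : ℕ), by have := i.isLt; omega⟩)
            (σ ⟨2 * (i : ℕ) + 1, by have := i.isLt; omega⟩)
  else 0



private theorem perm_sum_step {n : ℕ} {R : Type*} [AddCommMonoid R] (F : Equiv.Perm (Fin (n+1)) → R) :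
    ∑ σ : Equiv.Perm (Fin (n+1)), F σ
      = ∑ p : Fin (n+1), ∑ e : Equiv.Perm (Fin n), F (Equiv.Perm.decomposeFin.symm (p, e)) := by
  rw [← Equiv.Perm.decomposeFin.symm.sum_comp, Fintype.sum_prod_type]

set_option maxHeartbeats 4000000 in
private theorem pfaffian_key (f : Fin 6 → Fin 6 → ℝ) (h : ∀ i j : Fin 6, f j i = -f i j) :
    ∑ σ : Equiv.Perm (Fin 6), ((Equiv.Perm.sign σ : ℤ) : ℝ) *
        (f (σ 0) (σ 1) * (f (σ 2) (σ 3) * f (σ 4) (σ 5)))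
    = 48 * (f 0 1 * f 2 3 * f 4 5 - f 0 1 * f 2 4 * f 3 5 + f 0 1 * f 2 5 * f 3 4
      - f 0 2 * f 1 3 * f 4 5 + f 0 2 * f 1 4 * f 3 5 - f 0 2 * f 1 5 * f 3 4
      + f 0 3 * f 1 2 * f 4 5 - f 0 3 * f 1 4 * f 2 5 + f 0 3 * f 1 5 * f 2 4
      - f 0 4 * f 1 2 * f 3 5 + f 0 4 * f 1 3 * f 2 5 - f 0 4 * f 1 5 * f 2 3
      + f 0 5 * f 1 2 * f 3 4 - f 0 5 * f 1 3 * f 2 4 + f 0 5 * f 1 4 * f 2 3) := by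
  simp only [perm_sum_step, Equiv.Perm.decomposeFin.symm_sign,
    Equiv.Perm.decomposeFin_symm_apply_zero, Equiv.Perm.decomposeFin_symm_apply_one,
    show (2 : Fin 6) = Fin.succ 1 by rfl, show (3 : Fin 6) = Fin.succ 2 by rfl,
    show (4 : Fin 6) = Fin.succ 3 by rfl, show (5 : Fin 6) = Fin.succ 4 by rfl,
    show (2 : Fin 5) = Fin.succ 1 by rfl, show (3 : Fin 5) = Fin.succ 2 by rfl,
    show (4 : Fin 5) = Fin.succ 3 by rfl,
    show (2 : Fin 4) = Fin.succ 1 by rfl, show (3 : Fin 4) = Fin.succ 2 by rfl,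
    show (2 : Fin 3) = Fin.succ 1 by rfl,
    Equiv.Perm.decomposeFin_symm_apply_succ,
    Fin.sum_univ_succ, Finset.univ_unique, Finset.sum_singleton, Fin.sum_univ_zero]
  norm_num [Equiv.swap_apply_def, Fin.ext_iff]
  simp only [show Fin.succ (2:Fin 5) = 3 from rfl, show Fin.succ (3:Fin 5) = 4 from rfl,
    show Fin.succ (4:Fin 5) = 5 from rfl, show Fin.succ (2:Fin 4) = 3 from rfl,
    show Fin.succ (3:Fin 4) = 4 from rfl, show Fin.succ (2:Fin 3) = 3 from rfl,
    show Fin.succ (1:Fin 5) = 2 from rfl, show Fin.succ (1:Fin 4) = 2 from rfl,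
    show Fin.succ (1:Fin 3) = 2 from rfl, show Fin.succ (1:Fin 2) = 2 from rfl,
    Fin.succ_zero_eq_one, Fin.succ_one_eq_two,
    h 0 1, h 0 2, h 0 3, h 0 4, h 0 5, h 1 2, h 1 3, h 1 4, h 1 5,
    h 2 3, h 2 4, h 2 5, h 3 4, h 3 5, h 4 5]
  ring

private theorem abs_mul3_le {x y z a b c : ℝ} (ha : 0 ≤ a) (hb : 0 ≤ b) (hc : 0 ≤ c)
    (hx : |x| ≤ a) (hy : |y| ≤ b) (hz : |z| ≤ c) : |x * y * z| ≤ a * b * c := by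
  rw [abs_mul, abs_mul]
  exact mul_le_mul (mul_le_mul hx hy (abs_nonneg y) ha) hz (abs_nonneg z) (mul_nonneg ha hb)

/-- Let `Λ` be a real antisymmetric `6 × 6` matrix with all entries bounded by `1` in
absolute value and all above-diagonal entries other than `Λ₁₂, Λ₃₄, Λ₅₆` bounded by `ε`.
Then `|Pf(Λ) − Λ₁₂ Λ₃₄ Λ₅₆| ≤ 14 ε²`. -/
theorem pfaffian_six_approx (ε : ℝ) (hε : 0 ≤ ε)
    (Λ : Matrix (Fin 6) (Fin 6) ℝ) (hA : Λᵀ = -Λ)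
    (hbd : ∀ a b : Fin 6, |Λ a b| ≤ 1)
    (hsm : ∀ a b : Fin 6, a < b →
      ¬((a = 0 ∧ b = 1) ∨ (a = 2 ∧ b = 3) ∨ (a = 4 ∧ b = 5)) → |Λ a b| ≤ ε) :
    |pfaffian Λ - Λ 0 1 * Λ 2 3 * Λ 4 5| ≤ 14 * ε ^ 2 := by
  have hanti : ∀ i j : Fin 6, Λ j i = -Λ i j := fun i j => by
    simpa using congrFun (congrFun hA i) j
  have hpf : pfaffian Λ = (48:ℝ)⁻¹ * ∑ σ : Equiv.Perm (Fin 6), ((Equiv.Perm.sign σ : ℤ) : ℝ) *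
      (Λ (σ 0) (σ 1) * (Λ (σ 2) (σ 3) * Λ (σ 4) (σ 5))) := by
    rw [pfaffian, dif_pos (by norm_num)]
    norm_num [Fin.prod_univ_succ, Nat.factorial,
      show ∀ h, (⟨2,h⟩ : Fin 6) = 2 from fun _ => rfl,
      show ∀ h, (⟨3,h⟩ : Fin 6) = 3 from fun _ => rfl,
      show ∀ h, (⟨4,h⟩ : Fin 6) = 4 from fun _ => rfl,
      show ∀ h, (⟨5,h⟩ : Fin 6) = 5 from fun _ => rfl]
  have hb2 : |Λ 0 1 * Λ 2 4 * Λ 3 5| ≤ ε^2 :=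
    (abs_mul3_le zero_le_one hε hε (hbd 0 1) (hsm 2 4 (by decide) (by decide)) (hsm 3 5 (by decide) (by decide))).trans_eq (by ring)
  have hb3 : |Λ 0 1 * Λ 2 5 * Λ 3 4| ≤ ε^2 :=
    (abs_mul3_le zero_le_one hε hε (hbd 0 1) (hsm 2 5 (by decide) (by decide)) (hsm 3 4 (by decide) (by decide))).trans_eq (by ring)
  have hb4 : |Λ 0 2 * Λ 1 3 * Λ 4 5| ≤ ε^2 :=
    (abs_mul3_le hε hε zero_le_one (hsm 0 2 (by decide) (by decide)) (hsm 1 3 (by decide) (by decide)) (hbd 4 5)).trans_eq (by ring)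
  have hb5 : |Λ 0 2 * Λ 1 4 * Λ 3 5| ≤ ε^2 :=
    (abs_mul3_le zero_le_one hε hε (hbd 0 2) (hsm 1 4 (by decide) (by decide)) (hsm 3 5 (by decide) (by decide))).trans_eq (by ring)
  have hb6 : |Λ 0 2 * Λ 1 5 * Λ 3 4| ≤ ε^2 :=
    (abs_mul3_le zero_le_one hε hε (hbd 0 2) (hsm 1 5 (by decide) (by decide)) (hsm 3 4 (by decide) (by decide))).trans_eq (by ring)
  have hb7 : |Λ 0 3 * Λ 1 2 * Λ 4 5| ≤ ε^2 :=
    (abs_mul3_le hε hε zero_le_one (hsm 0 3 (by decide) (by decide)) (hsm 1 2 (by decide) (by decide)) (hbd 4 5)).trans_eq (by ring)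
  have hb8 : |Λ 0 3 * Λ 1 4 * Λ 2 5| ≤ ε^2 :=
    (abs_mul3_le zero_le_one hε hε (hbd 0 3) (hsm 1 4 (by decide) (by decide)) (hsm 2 5 (by decide) (by decide))).trans_eq (by ring)
  have hb9 : |Λ 0 3 * Λ 1 5 * Λ 2 4| ≤ ε^2 :=
    (abs_mul3_le zero_le_one hε hε (hbd 0 3) (hsm 1 5 (by decide) (by decide)) (hsm 2 4 (by decide) (by decide))).trans_eq (by ring)
  have hb10 : |Λ 0 4 * Λ 1 2 * Λ 3 5| ≤ ε^2 :=
    (abs_mul3_le zero_le_one hε hε (hbd 0 4) (hsm 1 2 (by decide) (by decide)) (hsm 3 5 (by decide) (by decide))).trans_eq (by ring)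
  have hb11 : |Λ 0 4 * Λ 1 3 * Λ 2 5| ≤ ε^2 :=
    (abs_mul3_le zero_le_one hε hε (hbd 0 4) (hsm 1 3 (by decide) (by decide)) (hsm 2 5 (by decide) (by decide))).trans_eq (by ring)
  have hb12 : |Λ 0 4 * Λ 1 5 * Λ 2 3| ≤ ε^2 :=
    (abs_mul3_le hε hε zero_le_one (hsm 0 4 (by decide) (by decide)) (hsm 1 5 (by decide) (by decide)) (hbd 2 3)).trans_eq (by ring)
  have hb13 : |Λ 0 5 * Λ 1 2 * Λ 3 4| ≤ ε^2 :=
    (abs_mul3_le zero_le_one hε hε (hbd 0 5) (hsm 1 2 (by decide) (by decide)) (hsm 3 4 (by decide) (by decide))).trans_eq (by ring)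
  have hb14 : |Λ 0 5 * Λ 1 3 * Λ 2 4| ≤ ε^2 :=
    (abs_mul3_le zero_le_one hε hε (hbd 0 5) (hsm 1 3 (by decide) (by decide)) (hsm 2 4 (by decide) (by decide))).trans_eq (by ring)
  have hb15 : |Λ 0 5 * Λ 1 4 * Λ 2 3| ≤ ε^2 :=
    (abs_mul3_le hε hε zero_le_one (hsm 0 5 (by decide) (by decide)) (hsm 1 4 (by decide) (by decide)) (hbd 2 3)).trans_eq (by ring)
  have hM : pfaffian Λ - Λ 0 1 * Λ 2 3 * Λ 4 5 = 0 - Λ 0 1 * Λ 2 4 * Λ 3 5 + Λ 0 1 * Λ 2 5 * Λ 3 4 - Λ 0 2 * Λ 1 3 * Λ 4 5 + Λ 0 2 * Λ 1 4 * Λ 3 5 - Λ 0 2 * Λ 1 5 * Λ 3 4 + Λ 0 3 * Λ 1 2 * Λ 4 5 - Λ 0 3 * Λ 1 4 * Λ 2 5 + Λ 0 3 * Λ 1 5 * Λ 2 4 - Λ 0 4 * Λ 1 2 * Λ 3 5 + Λ 0 4 * Λ 1 3 * Λ 2 5 - Λ 0 4 * Λ 1 5 * Λ 2 3 + Λ 0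 5 * Λ 1 2 * Λ 3 4 - Λ 0 5 * Λ 1 3 * Λ 2 4 + Λ 0 5 * Λ 1 4 * Λ 2 3 := by
    rw [hpf, pfaffian_key Λ hanti]; ring
  rw [hM, abs_le]
  constructor <;> linarith [(abs_le.mp hb2).1, (abs_le.mp hb2).2, (abs_le.mp hb3).1, (abs_le.mp hb3).2, (abs_le.mp hb4).1, (abs_le.mp hb4).2, (abs_le.mp hb5).1, (abs_le.mp hb5).2, (abs_le.mp hb6).1, (abs_le.mp hb6).2, (abs_le.mp hb7).1, (abs_le.mp hb7).2, (abs_le.mp hb8).1, (abs_le.mp hb8).2, (abs_le.mp hb9).1, (abs_le.mp hb9).2, (abs_le.mp hb10).1, (abs_le.mp hb10).2, (abs_le.mp hb11).1, (abs_le.mp hb11).2, (abs_le.mp hb12).1, (abs_le.mp hb12).2, (abs_le.mp hb13).1, (abs_le.mp hb13).2, (abs_le.mp hb14).1, (abs_le.mp hb14).2, (abs_le.mp hb15).1, (abs_le.mp hb15).2]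
end

section
/- Let Φ = (1 + √5)/2. For every real ε with 0 ≤ ε ≤ 0.016, the inequality ((1 − Φ²(3ε + ε²))/2)³ ≥ Φ³(ε + 14ε²) holds. -/
/-- With `Φ = (1 + √5)/2` the golden ratio, for every `0 ≤ ε ≤ 0.016` we have
`((1 − Φ²(3ε + ε²))/2)³ ≥ Φ³(ε + 14ε²)`. -/
theorem soundness_threshold_six_body (Φ ε : ℝ) (hΦ : Φ = (1 + Real.sqrt 5) / 2)
    (hε0 : 0 ≤ ε) (hε : ε ≤ 0.016) :
    ((1 - Φ ^ 2 * (3 * ε + ε ^ 2)) / 2) ^ 3 ≥ Φ ^ 3 * (ε + 14 * ε ^ 2) := by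
  have h5 : Real.sqrt 5 ^ 2 = 5 := Real.sq_sqrt (by norm_num)
  have hub : Real.sqrt 5 ≤ 2.2360680 := by
    nlinarith [h5, Real.sqrt_nonneg 5]
  have h0 : (0:ℝ) ≤ Real.sqrt 5 := Real.sqrt_nonneg 5
  have hp2 : Φ ^ 2 = Φ + 1 := by rw [hΦ]; nlinarith [h5]
  have hp3 : Φ ^ 3 = 2 * Φ + 1 := by nlinarith [hp2]
  have hpu : Φ ≤ 1.6180340 := by rw [hΦ]; linarith
  have hp0 : (0:ℝ) ≤ Φ := by rw [hΦ]; linarith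
  have hA : Φ ^ 2 ≤ 2.6180340 := by rw [hp2]; linarith
  have hA0 : (0:ℝ) ≤ Φ ^ 2 := sq_nonneg Φ
  have hB : Φ ^ 3 ≤ 4.2360681 := by rw [hp3]; linarith
  have he : 0 ≤ 3 * ε + ε ^ 2 := by nlinarith
  have he2 : 0 ≤ ε + 14 * ε ^ 2 := by nlinarith
  have key : ((1 - 2.6180340 * (3 * ε + ε ^ 2)) / 2) ^ 3 ≥ 4.2360681 * (ε + 14 * ε ^ 2) := by
    nlinarith [sq_nonneg ε, mul_nonneg hε0 hε0, mul_nonneg (mul_nonneg hε0 hε0) hε0,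
      mul_nonneg (mul_nonneg (mul_nonneg hε0 hε0) hε0) hε0,
      mul_nonneg (mul_nonneg hε0 hε0) (sub_nonneg.2 hε),
      mul_nonneg (mul_nonneg (mul_nonneg hε0 hε0) hε0) (sub_nonneg.2 hε),
      mul_nonneg (mul_nonneg (mul_nonneg (mul_nonneg hε0 hε0) hε0) hε0) (sub_nonneg.2 hε),
      sq_nonneg (ε - 0.016), sq_nonneg (ε*(ε-0.016))]
  have hmono : (1 - Φ ^ 2 * (3 * ε + ε ^ 2)) / 2 ≥ (1 - 2.6180340 * (3 * ε + ε ^ 2)) / 2 := by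
    have := mul_le_mul_of_nonneg_right hA he
    linarith
  have hpos : (0:ℝ) ≤ (1 - 2.6180340 * (3 * ε + ε ^ 2)) / 2 := by nlinarith
  calc ((1 - Φ ^ 2 * (3 * ε + ε ^ 2)) / 2) ^ 3
      ≥ ((1 - 2.6180340 * (3 * ε + ε ^ 2)) / 2) ^ 3 := by
        apply pow_le_pow_left₀ hpos hmono
    _ ≥ 4.2360681 * (ε + 14 * ε ^ 2) := key
    _ ≥ Φ ^ 3 * (ε + 14 * ε ^ 2) := mul_le_mul_of_nonneg_right hB he2
end
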